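/- arXiv:1308.3831 — 4 statements merged into one kernel-verified Lean document; each statement's English description precedes it below -/
import Mathlib

section
/- Let 0 < p < 1, q = 1−p, and let a, r be positive integers with n > 2r+1 sufficiently large so the conditioning event is possible. Then E_p[R | σ_0 = σ_1 = … = σ_{a−1} = 0, σ_a = 1] ≤ q^{−r}·(a·q^r + 1/(p·q)). -/
open Finset


/-- Number of active neighbors of vertex `i` in the ring `C_n(r)`.
For `n > 2r+1` the `2r` offsets `±1, …, ±r` give pairwise distinct neighbors. -/
def activeNbrs (n r : ℕ) (σ : ZMod n → Bool) (i : ZMod n) : ℕ :=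
  ∑ k ∈ Finset.Icc 1 r,
    ((if σ (i + (k : ZMod n)) then 1 else 0) + (if σ (i - (k : ZMod n)) then 1 else 0))

/-- One synchronous step of strict majority bootstrap percolation on `C_n(r)`:
a passive vertex (degree `2r`) becomes active iff at least `r+1 = ⌈(2r+1)/2⌉`
of its neighbors are active; active vertices stay active. -/
def ringStep (n r : ℕ) (σ : ZMod n → Bool) : ZMod n → Bool :=
  fun i => σ i || decide (r + 1 ≤ activeNbrs n r σ i)

/-- The fixed point of strict MBP on `C_n(r)`; `n` monotone steps suffice to stabilize. -/
def ringFix (n r : ℕ) (σ : ZMod n → Bool) : ZMod n → Bool :=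
  (ringStep n r)^[n] σ

/-- Probability of an event under i.i.d. Bernoulli(`p`) initial states. -/
noncomputable def pr {V : Type} [Fintype V] [DecidableEq V] (p : ℝ) (S : Set (V → Bool)) : ℝ :=
  ∑ σ : V → Bool, S.indicator (fun τ => ∏ v, (if τ v then p else 1 - p)) σ

/-- Expectation of a random variable under i.i.d. Bernoulli(`p`) initial states. -/
noncomputable def expec {V : Type} [Fintype V] [DecidableEq V]
    (p : ℝ) (f : (V → Bool) → ℝ) : ℝ :=
  ∑ σ : V → Bool, f σ * ∏ v, (if σ v then p else 1 - p)

/-- `E_p[X_0(n,r)]`: probability that vertex `0` is active at the fixed point. -/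
noncomputable def Ex (r : ℕ) (p : ℝ) (n : ℕ) : ℝ :=
  if h : n = 0 then 0 else
    haveI : NeZero n := ⟨h⟩
    pr p {σ : ZMod n → Bool | ringFix n r σ 0 = true}

/-- `p_R(n,r,p)`: probability that strictly more than half of the `n` vertices are
active at the fixed point of strict MBP on `C_n(r)`. -/
noncomputable def pR (r : ℕ) (p : ℝ) (n : ℕ) : ℝ :=
  if h : n = 0 then 0 else
    haveI : NeZero n := ⟨h⟩
    pr p {σ : ZMod n → Bool |
      n < 2 * (Finset.univ.filter (fun i : ZMod n => ringFix n r σ i = true)).card}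

/-- There is a wall located `ℓ` vertices to the right of vertex `0`:
`σ_ℓ = 1` and `σ_{ℓ+1} = ⋯ = σ_{ℓ+(r+1)} = 0`. -/
def hasWallR (n r : ℕ) (σ : ZMod n → Bool) (ℓ : ℕ) : Prop :=
  σ ((ℓ : ℕ) : ZMod n) = true ∧ ∀ j ∈ Finset.Icc 1 (r + 1), σ (((ℓ + j : ℕ) : ZMod n)) = false

/-- There is a wall located `ℓ` vertices to the left of vertex `0`:
`σ_{−ℓ} = 1` and `σ_{−ℓ−1} = ⋯ = σ_{−ℓ−(r+1)} = 0`. -/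
def hasWallL (n r : ℕ) (σ : ZMod n → Bool) (ℓ : ℕ) : Prop :=
  σ (-((ℓ : ℕ) : ZMod n)) = true ∧
    ∀ j ∈ Finset.Icc 1 (r + 1), σ (-(((ℓ + j : ℕ) : ZMod n))) = false

open Classical in
/-- `R`: the smallest positive `ℓ` such that there is a wall located `ℓ` vertices to the
right of vertex `0`; equal to `n` if no such wall exists. -/
noncomputable def Rwall (n r : ℕ) (σ : ZMod n → Bool) : ℕ :=
  if h : ∃ ℓ, 0 < ℓ ∧ hasWallR n r σ ℓ then Nat.find h else n

open Classical in
/-- `L`: the smallest positive `ℓ` such that there is a wall located `ℓ` vertices to the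
left of vertex `0`; equal to `n` if no such wall exists. -/
noncomputable def Lwall (n r : ℕ) (σ : ZMod n → Bool) : ℕ :=
  if h : ∃ ℓ, 0 < ℓ ∧ hasWallL n r σ ℓ then Nat.find h else n

/-!
Write `C` for the conditioning event, `Q = p q^{r+1}` and `S ℓ = P(C, R ≥ ℓ)`. Since
`R ≤ a + #{ℓ ∈ (a, n] | ℓ ≤ R}`, we have `E[R; C] ≤ a P(C) + ∑_{a < ℓ ≤ n} S ℓ`.
Overwriting the block `ℓ, …, ℓ+r+1` of a configuration with the pattern `1 0^{r+1}` creates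
a wall at `ℓ` without destroying `C`, so it maps `{C, R ≥ ℓ}` into `{C, R = ℓ}`; since the
block carries weight `Q` and the map forgets only the block, `Q S ℓ ≤ S ℓ - S (ℓ+1)` as long
as the block does not wrap around the ring. Telescoping over these `ℓ`, and bounding the at
most `r+2` remaining terms with `(r+2) Q ≤ 1` (a binomial probability), gives
`Q ∑ S ℓ ≤ P(C)`, that is `E[R | C] ≤ a + 1/Q`.
-/

section Bernoulli

variable {V : Type} {p : ℝ}

lemma prod_bernoulli_nonneg (hp0 : 0 ≤ p) (hp1 : p ≤ 1) (s : Finset V) (σ : V → Bool) :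
    0 ≤ ∏ v ∈ s, (if σ v then p else 1 - p) :=
  prod_nonneg fun v _ => by split <;> linarith

variable [Fintype V] [DecidableEq V]

lemma sum_prod_bernoulli : ∑ σ : V → Bool, ∏ v, (if σ v then p else 1 - p) = 1 := by
  rw [← (Fintype.prod_sum fun (_ : V) (b : Bool) => if b then p else 1 - p)]
  simp

lemma pr_nonneg (hp0 : 0 ≤ p) (hp1 : p ≤ 1) (S : Set (V → Bool)) : 0 ≤ pr p S :=
  sum_nonneg fun σ _ => Set.indicator_nonneg (fun τ _ => prod_bernoulli_nonneg hp0 hp1 _ τ) σ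

lemma pr_mono (hp0 : 0 ≤ p) (hp1 : p ≤ 1) {S T : Set (V → Bool)} (h : S ⊆ T) :
    pr p S ≤ pr p T :=
  sum_le_sum fun σ _ =>
    Set.indicator_le_indicator_of_subset h (fun τ => prod_bernoulli_nonneg hp0 hp1 _ τ) σ

lemma pr_union {S T : Set (V → Bool)} (h : Disjoint S T) : pr p (S ∪ T) = pr p S + pr p T := by
  simp only [pr, Set.indicator_union_of_disjoint h, sum_add_distrib]

lemma pr_inter_le_eq_add (S : Set (V → Bool)) (f : (V → Bool) → ℕ) (ℓ : ℕ) :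
    pr p (S ∩ {σ | ℓ ≤ f σ}) =
      pr p (S ∩ {σ | f σ = ℓ}) + pr p (S ∩ {σ | ℓ + 1 ≤ f σ}) := by
  rw [← pr_union, ← Set.inter_union_distrib_left]
  · congr 2
    ext σ
    simp only [Set.mem_union, Set.mem_ofPred_eq]
    omega
  · refine Disjoint.mono Set.inter_subset_right Set.inter_subset_right <|
      Set.disjoint_left.2 fun σ h₁ h₂ => ?_
    simp only [Set.mem_ofPred_eq] at h₁ h₂
    omega

lemma expec_indicator_le (hp0 : 0 ≤ p) (hp1 : p ≤ 1) (S : Set (V → Bool))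
    {f : (V → Bool) → ℕ} {N : ℕ} (hf : ∀ σ, f σ ≤ N) (a : ℕ) :
    expec p (S.indicator fun σ => (f σ : ℝ)) ≤
      a * pr p S + ∑ ℓ ∈ Ioc a N, pr p (S ∩ {σ | ℓ ≤ f σ}) := by
  classical
  simp only [expec, pr, mul_sum, sum_comm (γ := ℕ), ← sum_add_distrib]
  refine sum_le_sum fun σ _ => ?_
  by_cases hσ : σ ∈ S
  · have hcount : (f σ : ℝ) ≤ a + #((Ioc a N).filter (· ≤ f σ)) := by
      have hfilter : (Ioc a N).filter (· ≤ f σ) = Ioc a (f σ) := by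
        ext ℓ
        simp only [mem_filter, mem_Ioc]
        have := hf σ
        omega
      rw [hfilter, Nat.card_Ioc]
      norm_cast
      omega
    simp only [Set.indicator_apply, Set.mem_inter_iff, hσ, true_and, if_true, Set.mem_ofPred_eq]
    rw [← sum_filter, sum_const, nsmul_eq_mul, ← add_mul]
    exact mul_le_mul_of_nonneg_right hcount (prod_bernoulli_nonneg hp0 hp1 _ σ)
  · simp [hσ]

def overwrite (B : Finset V) (τ σ : V → Bool) : V → Bool :=
  fun v => if v ∈ B then τ v else σ v

lemma prod_overwrite_mul (B : Finset V) (τ σ : V → Bool) :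
    (∏ v, if overwrite B τ σ v then p else 1 - p) * ∏ v ∈ B, (if σ v then p else 1 - p) =
      (∏ v ∈ B, if τ v then p else 1 - p) * ∏ v, if σ v then p else 1 - p := by
  have hB : ∏ v ∈ B, (if overwrite B τ σ v then p else 1 - p) =
      ∏ v ∈ B, if τ v then p else 1 - p :=
    prod_congr rfl fun v hv => by simp only [overwrite, if_pos hv]
  have hBc : ∏ v ∈ Bᶜ, (if overwrite B τ σ v then p else 1 - p) =
      ∏ v ∈ Bᶜ, if σ v then p else 1 - p :=
    prod_congr rfl fun v hv => by simp only [overwrite, if_neg (mem_compl.1 hv)]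
  rw [← prod_mul_prod_compl B, ← prod_mul_prod_compl B (fun v => if σ v then p else 1 - p),
    hB, hBc]
  ring

lemma mul_pr_le_pr_of_mapsTo_overwrite (hp0 : 0 ≤ p) (hp1 : p ≤ 1) (B : Finset V)
    (τ : V → Bool) {S T : Set (V → Bool)} (hST : Set.MapsTo (overwrite B τ) S T) :
    (∏ v ∈ B, if τ v then p else 1 - p) * pr p S ≤ pr p T := by
  set w : (V → Bool) → ℝ := fun σ => ∏ v, if σ v then p else 1 - p
  set wB : (B → Bool) → ℝ := fun η => ∏ j, if η j then p else 1 - p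
  have hwB (σ : V → Bool) : wB (fun j => σ j) = ∏ v ∈ B, if σ v then p else 1 - p :=
    prod_coe_sort B fun v => if σ v then p else 1 - p
  let split : (V → Bool) → (V → Bool) × (B → Bool) :=
    fun σ => (overwrite B τ σ, fun j => σ j)
  have hsplit : Function.Injective split := by
    intro σ₁ σ₂ h
    obtain ⟨h₁, h₂⟩ := Prod.mk.inj h
    funext v
    by_cases hv : v ∈ B
    · exact congrFun h₂ ⟨v, hv⟩
    · simpa [overwrite, hv] using congrFun h₁ v
  calc (∏ v ∈ B, if τ v then p else 1 - p) * pr p S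
      ≤ ∑ σ, T.indicator w (overwrite B τ σ) * wB (fun j => σ j) := by
        rw [pr, mul_sum]
        refine sum_le_sum fun σ _ => ?_
        by_cases hσ : σ ∈ S
        · rw [Set.indicator_of_mem hσ, Set.indicator_of_mem (hST hσ), hwB, prod_overwrite_mul]
        · rw [Set.indicator_of_notMem hσ, mul_zero]
          exact mul_nonneg (Set.indicator_nonneg (fun τ _ => prod_bernoulli_nonneg hp0 hp1 _ τ) _)
            (prod_bernoulli_nonneg hp0 hp1 _ _)
    _ = ∑ y ∈ univ.image split, T.indicator w y.1 * wB y.2 := by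
        rw [sum_image fun _ _ _ _ h => hsplit h]
    _ ≤ ∑ y : (V → Bool) × (B → Bool), T.indicator w y.1 * wB y.2 :=
        sum_le_univ_sum_of_nonneg fun y =>
          mul_nonneg (Set.indicator_nonneg (fun τ _ => prod_bernoulli_nonneg hp0 hp1 _ τ) _)
            (prod_bernoulli_nonneg hp0 hp1 _ _)
    _ = pr p T := by
        rw [Fintype.sum_prod_type, ← Fintype.sum_mul_sum, sum_prod_bernoulli, mul_one]
        rfl

end Bernoulli

lemma mul_sum_Ioc_le_of_mul_le_sub {S : ℕ → ℝ} {c : ℝ} {a m N : ℕ} (hS : Antitone S)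
    (hS0 : ∀ ℓ, 0 ≤ S ℓ) (hc : 0 ≤ c) (ham : a ≤ m) (hmN : m ≤ N)
    (hstep : ∀ ℓ ∈ Ioc a m, c * S ℓ ≤ S ℓ - S (ℓ + 1))
    (htail : ((N - m : ℕ) : ℝ) * c ≤ 1) :
    c * ∑ ℓ ∈ Ioc a N, S ℓ ≤ S (a + 1) := by
  rw [← sum_Ioc_consecutive S ham hmN, mul_add]
  have hhead : c * ∑ ℓ ∈ Ioc a m, S ℓ ≤ S (a + 1) - S (m + 1) :=
    calc c * ∑ ℓ ∈ Ioc a m, S ℓ ≤ ∑ ℓ ∈ Ioc a m, (S ℓ - S (ℓ + 1)) := by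
          rw [mul_sum]; exact sum_le_sum hstep
      _ = S (a + 1) - S (m + 1) := by
          rw [← Finset.Ico_add_one_add_one_eq_Ioc, ← neg_sub, ← sum_Ico_sub S (by omega)]
          simp
  have htail' : c * ∑ ℓ ∈ Ioc m N, S ℓ ≤ S (m + 1) :=
    calc c * ∑ ℓ ∈ Ioc m N, S ℓ ≤ c * ((N - m : ℕ) * S (m + 1)) := by
          gcongr
          rw [← Nat.card_Ioc, ← nsmul_eq_mul]
          exact sum_le_card_nsmul _ _ _ fun ℓ hℓ => hS (mem_Ioc.1 hℓ).1
      _ = ((N - m : ℕ) * c) * S (m + 1) := by ring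
      _ ≤ S (m + 1) := mul_le_of_le_one_left (hS0 _) htail
  linarith

lemma succ_mul_mul_pow_le_one {p : ℝ} (hp0 : 0 ≤ p) (hp1 : p ≤ 1) (k : ℕ) :
    (k + 1 : ℝ) * (p * (1 - p) ^ k) ≤ 1 :=
  have hq : 0 ≤ 1 - p := by linarith
  calc (k + 1 : ℝ) * (p * (1 - p) ^ k) = p ^ 1 * (1 - p) ^ (k + 1 - 1) * (k + 1).choose 1 := by
        simp; ring
    _ ≤ ∑ m ∈ range (k + 1 + 1), p ^ m * (1 - p) ^ (k + 1 - m) * (k + 1).choose m :=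
        single_le_sum (f := fun m => p ^ m * (1 - p) ^ (k + 1 - m) * ((k + 1).choose m : ℝ))
          (fun m _ => by positivity) (mem_range.2 (by omega))
    _ = 1 := by rw [← add_pow, add_sub_cancel, one_pow]

section Walls

variable {n r : ℕ}

lemma natCast_inj_of_lt {x y : ℕ} (hx : x < n) (hy : y < n) : (x : ZMod n) = y ↔ x = y := by
  rw [ZMod.natCast_eq_natCast_iff', Nat.mod_eq_of_lt hx, Nat.mod_eq_of_lt hy]

lemma hasWallR_of_modEq {σ : ZMod n → Bool} {ℓ ℓ' : ℕ} (h : ℓ ≡ ℓ' [MOD n])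
    (hw : hasWallR n r σ ℓ) : hasWallR n r σ ℓ' := by
  have hcast : ∀ j, ((ℓ' + j : ℕ) : ZMod n) = ((ℓ + j : ℕ) : ZMod n) := fun j =>
    (ZMod.natCast_eq_natCast_iff _ _ _).2 (h.symm.add_right j)
  exact ⟨(ZMod.natCast_eq_natCast_iff _ _ _).2 h ▸ hw.1, fun j hj => hcast j ▸ hw.2 j hj⟩

lemma Rwall_le [NeZero n] (σ : ZMod n → Bool) : Rwall n r σ ≤ n := by
  classical
  unfold Rwall
  split_ifs with h
  · obtain ⟨ℓ, hℓ, hw⟩ := h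
    -- the wall at `ℓ` reappears at the representative of `ℓ` in `1, …, n`
    have hmod : ℓ ≡ (ℓ - 1) % n + 1 [MOD n] := by
      conv_lhs => rw [← Nat.sub_add_cancel hℓ]
      exact (Nat.mod_modEq _ n).symm.add_right 1
    have := Nat.mod_lt (ℓ - 1) (Nat.pos_of_ne_zero (NeZero.ne n))
    exact (Nat.find_le ⟨Nat.succ_pos _, hasWallR_of_modEq hmod hw⟩).trans (by omega)
  · exact le_rfl

lemma not_hasWallR_of_lt_Rwall {σ : ZMod n → Bool} {m : ℕ} (hm : 0 < m)
    (h : m < Rwall n r σ) : ¬hasWallR n r σ m := by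
  classical
  unfold Rwall at h
  split_ifs at h with hex
  · exact fun hw => Nat.find_min hex h ⟨hm, hw⟩
  · exact fun hw => hex ⟨m, hm, hw⟩

lemma Rwall_eq_of_isLeast {σ : ZMod n → Bool} {ℓ : ℕ}
    (h : IsLeast {m | 0 < m ∧ hasWallR n r σ m} ℓ) : Rwall n r σ = ℓ := by
  classical
  have hex : ∃ m, 0 < m ∧ hasWallR n r σ m := ⟨ℓ, h.1⟩
  rw [Rwall, dif_pos hex, Nat.find_eq_iff]
  exact ⟨h.1, fun m hm hw => absurd (h.2 hw) (by omega)⟩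

def wallBlock (n r ℓ : ℕ) : Finset (ZMod n) := (Icc ℓ (ℓ + r + 1)).image Nat.cast

def placeWall (n r ℓ : ℕ) : (ZMod n → Bool) → ZMod n → Bool :=
  overwrite (wallBlock n r ℓ) fun v => decide (v = ℓ)

variable {ℓ : ℕ}

lemma placeWall_natCast_of_lt (σ : ZMod n → Bool) (hℓ : ℓ + r + 1 < n) {x : ℕ}
    (hx : x < ℓ) : placeWall n r ℓ σ x = σ x := by
  refine if_neg fun hmem => ?_
  obtain ⟨t, ht, htx⟩ := mem_image.1 hmem
  have ht := mem_Icc.1 ht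
  exact absurd ((natCast_inj_of_lt (by omega) (by omega)).1 htx) (by omega)

lemma placeWall_natCast_add (σ : ZMod n → Bool) (hℓ : ℓ + r + 1 < n) {j : ℕ}
    (hj : j ≤ r + 1) : placeWall n r ℓ σ ((ℓ + j : ℕ) : ZMod n) = decide (j = 0) := by
  rw [placeWall, overwrite, wallBlock,
    if_pos (mem_image.2 ⟨ℓ + j, mem_Icc.2 ⟨by omega, by omega⟩, rfl⟩)]
  simp only [natCast_inj_of_lt (by omega : ℓ + j < n) (by omega : ℓ < n)]
  grind

lemma hasWallR_placeWall (σ : ZMod n → Bool) (hℓ : ℓ + r + 1 < n) :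
    hasWallR n r (placeWall n r ℓ σ) ℓ :=
  ⟨by simpa using placeWall_natCast_add σ hℓ (j := 0) (by omega),
    fun j hj => by
      have hj := mem_Icc.1 hj
      rw [placeWall_natCast_add σ hℓ hj.2]
      simp; omega⟩

lemma Rwall_placeWall {σ : ZMod n → Bool} (hℓ : ℓ + r + 1 < n) (hℓ0 : 0 < ℓ)
    (hR : ℓ ≤ Rwall n r σ) : Rwall n r (placeWall n r ℓ σ) = ℓ := by
  refine Rwall_eq_of_isLeast ⟨⟨hℓ0, hasWallR_placeWall σ hℓ⟩, fun m ⟨hm, hw⟩ => ?_⟩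
  by_contra! hmℓ
  by_cases hfar : m + r + 1 < ℓ
  · -- a wall ending before `ℓ` is untouched by `placeWall`
    refine not_hasWallR_of_lt_Rwall hm (hmℓ.trans_le hR) ⟨?_, fun j hj => ?_⟩
    · rw [← placeWall_natCast_of_lt σ hℓ hmℓ]; exact hw.1
    · have hj := mem_Icc.1 hj
      rw [← placeWall_natCast_of_lt σ hℓ (by omega : m + j < ℓ)]
      exact hw.2 j (mem_Icc.2 hj)
  · -- otherwise the zeros of the wall at `m` cover the new one at `ℓ`
    have h := hw.2 (ℓ - m) (mem_Icc.2 ⟨by omega, by omega⟩)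
    rw [show m + (ℓ - m) = ℓ + 0 by omega, placeWall_natCast_add σ hℓ (Nat.zero_le _)] at h
    simp at h

lemma prod_wallBlock (p : ℝ) (hℓ : ℓ + r + 1 < n) :
    ∏ v ∈ wallBlock n r ℓ, (if decide (v = (ℓ : ZMod n)) then p else 1 - p) =
      p * (1 - p) ^ (r + 1) := by
  have hzeros : ∀ t ∈ Ioc ℓ (ℓ + r + 1),
      (if decide ((t : ZMod n) = ℓ) then p else 1 - p) = 1 - p := fun t ht => by
    have ht := mem_Ioc.1 ht
    simp [natCast_inj_of_lt (by omega : t < n) (by omega : ℓ < n), ht.1.ne']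
  rw [wallBlock, prod_image fun x hx y hy h =>
      (natCast_inj_of_lt (by grind) (by grind)).1 h,
    Icc_eq_cons_Ioc (by omega), prod_cons, prod_congr rfl hzeros, prod_const, Nat.card_Ioc]
  simp only [decide_true, if_true]
  congr 2
  omega

def firstOneAt (n a : ℕ) : Set (ZMod n → Bool) :=
  {σ | (∀ i < a, σ ((i : ℕ) : ZMod n) = false) ∧ σ ((a : ℕ) : ZMod n) = true}

lemma mapsTo_placeWall_firstOneAt {a : ℕ} (ha : a < ℓ) (hℓ : ℓ + r + 1 < n) :
    Set.MapsTo (placeWall n r ℓ) (firstOneAt n a) (firstOneAt n a) := fun σ hσ =>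
  ⟨fun i hi => by rw [placeWall_natCast_of_lt σ hℓ (hi.trans ha)]; exact hσ.1 i hi,
    by rw [placeWall_natCast_of_lt σ hℓ ha]; exact hσ.2⟩

lemma mul_pr_le_pr_Rwall_eq [NeZero n] {p : ℝ} (hp0 : 0 ≤ p) (hp1 : p ≤ 1)
    {C : Set (ZMod n → Bool)} (hC : Set.MapsTo (placeWall n r ℓ) C C) (hℓ0 : 0 < ℓ)
    (hℓ : ℓ + r + 1 < n) :
    p * (1 - p) ^ (r + 1) * pr p (C ∩ {σ | ℓ ≤ Rwall n r σ}) ≤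
      pr p (C ∩ {σ | Rwall n r σ = ℓ}) := by
  rw [← prod_wallBlock p hℓ]
  exact mul_pr_le_pr_of_mapsTo_overwrite hp0 hp1 _ _
    fun σ hσ => ⟨hC hσ.1, Rwall_placeWall hℓ hℓ0 hσ.2⟩

lemma mul_sum_pr_le_Rwall_le_pr [NeZero n] {p : ℝ} (hp0 : 0 ≤ p) (hp1 : p ≤ 1)
    {C : Set (ZMod n → Bool)} {a : ℕ} (ha : a ≤ n)
    (hC : ∀ ℓ, a < ℓ → ℓ + r + 1 < n → Set.MapsTo (placeWall n r ℓ) C C) :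
    p * (1 - p) ^ (r + 1) * ∑ ℓ ∈ Ioc a n, pr p (C ∩ {σ | ℓ ≤ Rwall n r σ}) ≤
      pr p C := by
  have hq : 0 ≤ 1 - p := by linarith
  set S : ℕ → ℝ := fun ℓ => pr p (C ∩ {σ | ℓ ≤ Rwall n r σ})
  have hS : Antitone S := fun ℓ ℓ' h =>
    pr_mono hp0 hp1 (Set.inter_subset_inter_right _ fun σ hσ => h.trans hσ)
  -- a wall placed beyond `m` would wrap around the ring
  set m := max a (n - (r + 2))
  have hstep : ∀ ℓ ∈ Ioc a m, p * (1 - p) ^ (r + 1) * S ℓ ≤ S ℓ - S (ℓ + 1) := by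
    intro ℓ hℓ
    have hℓ := mem_Ioc.1 hℓ
    rw [show S ℓ - S (ℓ + 1) = pr p (C ∩ {σ | Rwall n r σ = ℓ}) by
      simp only [S, pr_inter_le_eq_add C (Rwall n r) ℓ]; ring]
    exact mul_pr_le_pr_Rwall_eq hp0 hp1 (hC ℓ hℓ.1 (by omega)) (by omega) (by omega)
  have htail : ((n - m : ℕ) : ℝ) * (p * (1 - p) ^ (r + 1)) ≤ 1 := by
    refine le_trans ?_ (succ_mul_mul_pow_le_one hp0 hp1 (r + 1))
    gcongr
    norm_cast
    omega
  exact (mul_sum_Ioc_le_of_mul_le_sub hS (fun _ => pr_nonneg hp0 hp1 _) (by positivity)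
    (le_max_left _ _) (by omega) hstep htail).trans (pr_mono hp0 hp1 Set.inter_subset_left)

end Walls

/-- `E_p[R | σ_0 = ⋯ = σ_{a−1} = 0, σ_a = 1] ≤ q^{−r}·(a·q^r + 1/(pq))` where `q = 1−p`.
The conditional expectation is written as `E_p[R·1_C]/P_p(C)`. -/
theorem expected_wall_distance (p : ℝ) (hp : 0 < p) (hp1 : p < 1) (a r n : ℕ)
    (han : a < n) :
    haveI : NeZero n := ⟨by omega⟩
    expec p (Set.indicator
        {σ : ZMod n → Bool |
          (∀ i < a, σ ((i : ℕ) : ZMod n) = false) ∧ σ ((a : ℕ) : ZMod n) = true}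
        (fun σ => (Rwall n r σ : ℝ))) /
      pr p {σ : ZMod n → Bool |
          (∀ i < a, σ ((i : ℕ) : ZMod n) = false) ∧ σ ((a : ℕ) : ZMod n) = true}
      ≤ (1 - p)⁻¹ ^ r * (a * (1 - p) ^ r + 1 / (p * (1 - p))) := by
  have : NeZero n := ⟨by omega⟩
  change expec p ((firstOneAt n a).indicator _) / pr p (firstOneAt n a) ≤ _
  set C := firstOneAt n a
  have hq : 0 < 1 - p := by linarith
  have hQ : 0 < p * (1 - p) ^ (r + 1) := by positivity
  have hrhs : (1 - p)⁻¹ ^ r * (a * (1 - p) ^ r + 1 / (p * (1 - p))) =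
      a + (p * (1 - p) ^ (r + 1))⁻¹ := by
    rw [inv_pow]
    field_simp
    ring
  have hsum := mul_sum_pr_le_Rwall_le_pr hp.le hp1.le han.le
    fun ℓ haℓ hℓ => mapsTo_placeWall_firstOneAt (r := r) haℓ hℓ
  rw [hrhs]
  refine div_le_of_le_mul₀ (pr_nonneg hp.le hp1.le C) (by positivity) ?_
  calc expec p (C.indicator fun σ => (Rwall n r σ : ℝ))
      ≤ a * pr p C + ∑ ℓ ∈ Ioc a n, pr p (C ∩ {σ | ℓ ≤ Rwall n r σ}) :=
        expec_indicator_le hp.le hp1.le C Rwall_le a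
    _ ≤ a * pr p C + pr p C / (p * (1 - p) ^ (r + 1)) := by
        gcongr
        exact (le_div_iff₀' hQ).2 hsum
    _ = (a + (p * (1 - p) ^ (r + 1))⁻¹) * pr p C := by ring
end

section
/- For every 0 < p < 1/2 with q = 1−p and every positive integer r, the probability that a Binomial(2r, p) random variable is at least r+1 satisfies P(Bin(2r,p) ≥ r+1) ≤ (4pq)^r. -/
/-!
Each term of the tail with `k ≥ r` satisfies `p^k q^(2r-k) ≤ p^r q^r`, since moving a factor
from `p` to `q ≥ p` can only increase the product; the binomial coefficients then sum to at
most `2^(2r) = 4^r`.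
-/

open Finset

theorem pow_mul_pow_sub_le_pow_mul_pow_sub {a b : ℝ} (ha : 0 ≤ a) (hab : a ≤ b)
    {m k n : ℕ} (hmk : m ≤ k) (hkn : k ≤ n) :
    a ^ k * b ^ (n - k) ≤ a ^ m * b ^ (n - m) := by
  obtain ⟨j, rfl⟩ := Nat.exists_eq_add_of_le hmk
  have hsub : n - m = j + (n - (m + j)) := by omega
  have hb : 0 ≤ b := ha.trans hab
  calc a ^ (m + j) * b ^ (n - (m + j))
      = a ^ m * a ^ j * b ^ (n - (m + j)) := by rw [pow_add]
    _ ≤ a ^ m * b ^ j * b ^ (n - (m + j)) := by gcongr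
    _ = a ^ m * b ^ (n - m) := by rw [hsub, pow_add, mul_assoc]

theorem sum_choose_le_two_pow {n : ℕ} {s : Finset ℕ} (hs : s ⊆ range (n + 1)) :
    ∑ k ∈ s, n.choose k ≤ 2 ^ n :=
  (sum_le_sum_of_subset hs).trans_eq (Nat.sum_range_choose n)

theorem sum_choose_mul_pow_mul_pow_le {p q : ℝ} (hp : 0 ≤ p) (hpq : p ≤ q) {m n : ℕ}
    {s : Finset ℕ} (hs : ∀ k ∈ s, m ≤ k ∧ k ≤ n) :
    ∑ k ∈ s, (n.choose k : ℝ) * p ^ k * q ^ (n - k) ≤ 2 ^ n * p ^ m * q ^ (n - m) := by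
  have hsub : s ⊆ range (n + 1) := fun k hk => mem_range.2 (Nat.lt_succ_of_le (hs k hk).2)
  calc ∑ k ∈ s, (n.choose k : ℝ) * p ^ k * q ^ (n - k)
      ≤ ∑ k ∈ s, (n.choose k : ℝ) * (p ^ m * q ^ (n - m)) := by
        refine sum_le_sum fun k hk => ?_
        rw [mul_assoc]
        exact mul_le_mul_of_nonneg_left
          (pow_mul_pow_sub_le_pow_mul_pow_sub hp hpq (hs k hk).1 (hs k hk).2) (Nat.cast_nonneg _)
    _ = ((∑ k ∈ s, n.choose k : ℕ) : ℝ) * (p ^ m * q ^ (n - m)) := by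
        rw [← sum_mul, Nat.cast_sum]
    _ ≤ 2 ^ n * (p ^ m * q ^ (n - m)) := by
        have hq : 0 ≤ q := hp.trans hpq
        exact mul_le_mul_of_nonneg_right (by exact_mod_cast sum_choose_le_two_pow hsub)
          (by positivity)
    _ = 2 ^ n * p ^ m * q ^ (n - m) := (mul_assoc _ _ _).symm

theorem binomial_tail_chernoff_general (p : ℝ) (hp : 0 < p) (hp2 : p < 1 / 2) (r : ℕ) :
    ∑ k ∈ Finset.Icc (r + 1) (2 * r),
        (Nat.choose (2 * r) k : ℝ) * p ^ k * (1 - p) ^ (2 * r - k)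
      ≤ (4 * p * (1 - p)) ^ r := by
  have hrange : ∀ k ∈ Icc (r + 1) (2 * r), r ≤ k ∧ k ≤ 2 * r := fun k hk => by
    rw [mem_Icc] at hk
    omega
  calc ∑ k ∈ Icc (r + 1) (2 * r), ((2 * r).choose k : ℝ) * p ^ k * (1 - p) ^ (2 * r - k)
      ≤ 2 ^ (2 * r) * p ^ r * (1 - p) ^ (2 * r - r) :=
        sum_choose_mul_pow_mul_pow_le hp.le (by linarith) hrange
    _ = (4 * p * (1 - p)) ^ r := by
        rw [show 2 * r - r = r by omega, pow_mul, mul_pow, mul_pow]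
        norm_num

/-- Chernoff bound for the binomial tail: for `0 < p < 1/2` and `q = 1 − p`,
`P(Bin(2r,p) ≥ r+1) = ∑_{k=r+1}^{2r} C(2r,k)·p^k·q^{2r−k} ≤ (4pq)^r`. -/
theorem binomial_tail_chernoff (p : ℝ) (hp : 0 < p) (hp2 : p < 1 / 2) (r : ℕ) (hr : 0 < r) :
    ∑ k ∈ Finset.Icc (r + 1) (2 * r),
        (Nat.choose (2 * r) k : ℝ) * p ^ k * (1 - p) ^ (2 * r - k)
      ≤ (4 * p * (1 - p)) ^ r :=
  binomial_tail_chernoff_general p hp hp2 r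
end

section
/- For every positive integer r, with ℓ = 2r+1, the cardinality of T_r is at most the cardinality of S_{ℓ,r}: |T_r| ≤ |S_{ℓ,r}|. -/
open Finset


/-- `W_{ℓ,r}`: the set of 0-1 words of length `ℓ` containing `r+1` consecutive `0`s. -/
def Wword (ℓ r : ℕ) : Set (Fin ℓ → Bool) :=
  {v | ∃ i : ℕ, ∃ h : i + (r + 1) ≤ ℓ, ∀ j : ℕ, ∀ hj : j < r + 1,
    v ⟨i + j, by omega⟩ = false}

/-- `S_{ℓ,r}`: the set of 0-1 words of length `ℓ` with no `r+1` consecutive `0`s such that,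
when a block of `ℓ` consecutive vertices of the ring `C_n(r)` is initialized with the word,
then whatever the initial states of the remaining vertices, all vertices of the block are
active at the fixed point of strict MBP. -/
def Sspread (ℓ r : ℕ) : Set (Fin ℓ → Bool) :=
  {v | v ∉ Wword ℓ r ∧
    ∀ n : ℕ, 2 * r + 1 < n → ℓ ≤ n → ∀ c : ZMod n, ∀ σ : ZMod n → Bool,
      (∀ i : Fin ℓ, σ (c + ((i : ℕ) : ZMod n)) = v i) →
      ∀ i : Fin ℓ, ringFix n r σ (c + ((i : ℕ) : ZMod n)) = true}

/-- Strict majority update applied to the single vertex `i` of `C_n(r)`. -/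
def updAt (n r : ℕ) (σ : ZMod n → Bool) (i : ZMod n) : ZMod n → Bool :=
  fun j => if j = i then σ i || decide (r + 1 ≤ activeNbrs n r σ i) else σ j

/-- Apply the strict majority update successively (in this order) to the vertices
`c + r, c + r + 1, …, c + 2r − 1` of `C_n(r)`. -/
def seqUpd (n r : ℕ) (c : ZMod n) (σ : ZMod n → Bool) : ZMod n → Bool :=
  (List.range r).foldl (fun τ k => updAt n r τ (c + ((r + k : ℕ) : ZMod n))) σ


/-- Weight function `ω` on the alphabet `{0,1}²`: `ω(0,0) = +1`, `ω(1,1) = −1`,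
and `ω(a,b) = 0` otherwise. -/
def dyckWt (a b : Bool) : ℤ :=
  if a = false ∧ b = false then 1 else if a = true ∧ b = true then -1 else 0

open Fin.NatCast

/-- `T_r`: binary words `v` of length `2r+1` with exactly `r+1` ones and `r` zeros,
`v_0 = v_{2r} = 1`, `v_r = 0`, and such that the word `w_1 ⋯ w_{r−1}` over `{0,1}²`
with `w_i = (v_i, v_{i+r})` is a generalized Dyck word for the weight `dyckWt`:
every prefix sum of weights is nonnegative, and the total sum is `0`. -/
def Tset (r : ℕ) : Set (Fin (2 * r + 1) → Bool) :=
  {v | (Finset.univ.filter (fun i => v i = true)).card = r + 1 ∧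
       (Finset.univ.filter (fun i => v i = false)).card = r ∧
       v ((0 : ℕ) : Fin (2 * r + 1)) = true ∧
       v ((2 * r : ℕ) : Fin (2 * r + 1)) = true ∧
       v ((r : ℕ) : Fin (2 * r + 1)) = false ∧
       (∀ j ∈ Finset.Icc 1 (r - 1),
         0 ≤ ∑ i ∈ Finset.Icc 1 j,
           dyckWt (v ((i : ℕ) : Fin (2 * r + 1))) (v ((i + r : ℕ) : Fin (2 * r + 1)))) ∧
       ∑ i ∈ Finset.Icc 1 (r - 1),
           dyckWt (v ((i : ℕ) : Fin (2 * r + 1))) (v ((i + r : ℕ) : Fin (2 * r + 1))) = 0}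

/-!
Place `v ∈ T_r` on the block `c, …, c + 2r`. During the first `r` rounds the sites
`c + r, …, c + 2r - 1` are activated from left to right: when `c + r + t` is reached it sees
the `t` sites `c + r, …, c + r + t - 1` activated before and every initial one among
`c + t, …, c + 2r`. Of the `r + 1` ones of `v` it misses only those in `[0, t) ∪ [r, r + t)`,
and pairing `i` with `i + r` the Dyck condition bounds their number by `t`. Then
`c + r - 1, …, c + 1` are activated from right to left, each seeing its `r` right neighbours
and the initially active site `c`. The dynamics is monotone, so the block stays active up to the
fixed point; and `v` has only `r` zeros, so no `r + 1` of them are consecutive.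
-/

section Ring

variable {n r : ℕ}

lemma activeNbrs_mono {σ τ : ZMod n → Bool} (h : σ ≤ τ) (i : ZMod n) :
    activeNbrs n r σ i ≤ activeNbrs n r τ i := by
  have hind : ∀ x, (if σ x then 1 else 0 : ℕ) ≤ if τ x then 1 else 0 := fun x => by
    have := Bool.le_iff_imp.mp (h x)
    cases hσ : σ x <;> cases hτ : τ x <;> simp_all
  exact sum_le_sum fun k _ => add_le_add (hind _) (hind _)

lemma le_ringStep (σ : ZMod n → Bool) : σ ≤ ringStep n r σ :=
  fun i => Bool.le_iff_imp.mpr fun h => by simp [ringStep, h]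

lemma ringStep_mono : Monotone (ringStep n r) := by
  intro σ τ h i
  simp only [ringStep, Bool.le_iff_imp, Bool.or_eq_true, decide_eq_true_eq]
  rintro (hσ | hcount)
  · exact Or.inl (Bool.le_iff_imp.mp (h i) hσ)
  · exact Or.inr (hcount.trans (activeNbrs_mono h i))

lemma iterate_ringStep_eq_true_of_le {σ : ZMod n → Bool} {i : ZMod n} {k l : ℕ}
    (hkl : k ≤ l) (h : (ringStep n r)^[k] σ i = true) : (ringStep n r)^[l] σ i = true :=
  Bool.le_iff_imp.mp
    (ringStep_mono.monotone_iterate_of_le_map (le_ringStep σ) hkl i) h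

lemma iterate_ringStep_eq_true {σ : ZMod n → Bool} {i : ZMod n} (h : σ i = true) (k : ℕ) :
    (ringStep n r)^[k] σ i = true :=
  iterate_ringStep_eq_true_of_le (Nat.zero_le k) h

/-- The bound counts offsets `±1, …, ±r`, not vertices, so it needs no distinctness of the
offsets in `ZMod n`. -/
lemma card_le_activeNbrs {τ : ZMod n → Bool} {c : ZMod n} {m : ℕ} (A : Finset ℕ)
    (hA : ∀ p ∈ A, p ≠ m ∧ m ≤ p + r ∧ p ≤ m + r) (hτ : ∀ p ∈ A, τ (c + p) = true) :
    #A ≤ activeNbrs n r τ (c + m) := by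
  have hsplit : activeNbrs n r τ (c + m) =
      #{k ∈ Icc 1 r | τ (c + m + (k : ℕ)) = true} +
        #{k ∈ Icc 1 r | τ (c + m - (k : ℕ)) = true} := by
    rw [activeNbrs, sum_add_distrib, card_filter, card_filter]
  have habove : #{p ∈ A | m < p} ≤ #{k ∈ Icc 1 r | τ (c + m + (k : ℕ)) = true} := by
    refine card_le_card_of_injOn (· - m) (fun p hp => ?_) (fun p hp q hq hpq => ?_)
    · simp only [coe_filter, Set.mem_ofPred_eq] at hp
      have := hA p hp.1
      simp only [coe_filter, mem_Icc, Set.mem_ofPred_eq]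
      refine ⟨by omega, ?_⟩
      rw [Nat.cast_sub hp.2.le, add_assoc, add_sub_cancel, ← hτ p hp.1]
    · simp only [coe_filter, Set.mem_ofPred_eq] at hp hq
      simp only at hpq
      omega
  have hbelow : #{p ∈ A | ¬ m < p} ≤ #{k ∈ Icc 1 r | τ (c + m - (k : ℕ)) = true} := by
    refine card_le_card_of_injOn (m - ·) (fun p hp => ?_) (fun p hp q hq hpq => ?_)
    · simp only [coe_filter, Set.mem_ofPred_eq] at hp
      have := hA p hp.1
      simp only [coe_filter, mem_Icc, Set.mem_ofPred_eq]
      refine ⟨by omega, ?_⟩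
      rw [Nat.cast_sub (by omega : p ≤ m), add_sub_assoc, sub_sub_cancel, ← hτ p hp.1]
    · simp only [coe_filter, Set.mem_ofPred_eq] at hp hq
      have := (hA p hp.1).1
      have := (hA q hq.1).1
      simp only at hpq
      omega
  rw [hsplit, ← card_filter_add_card_filter_not (s := A) (m < ·)]
  exact add_le_add habove hbelow

lemma ringStep_eq_true_of_card_le {τ : ZMod n → Bool} {c : ZMod n} {m : ℕ} (A : Finset ℕ)
    (hA : ∀ p ∈ A, p ≠ m ∧ m ≤ p + r ∧ p ≤ m + r) (hτ : ∀ p ∈ A, τ (c + p) = true)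
    (hcard : r + 1 ≤ #A) : ringStep n r τ (c + m) = true := by
  simp [ringStep, hcard.trans (card_le_activeNbrs A hA hτ)]

end Ring

section Sweeps

variable {n r : ℕ} {σ : ZMod n → Bool} {c : ZMod n} {w : ℕ → Bool}

lemma succ_le_card_Ico_union_filter {t : ℕ} (ht : t ≤ r)
    (htotal : r + 1 ≤ #{p ∈ range (2 * r + 1) | w p = true})
    (hprefix : #{p ∈ range t | w p = true} + #{p ∈ range t | w (p + r) = true} ≤ t) :
    r + 1 ≤ #(Ico r (r + t) ∪ {p ∈ Ico t (2 * r + 1) | w p = true}) := by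
  have hunion :=
    card_union_add_card_inter (Ico r (r + t)) {p ∈ Ico t (2 * r + 1) | w p = true}
  have hsplit : #{p ∈ range t | w p = true} + #{p ∈ Ico t (2 * r + 1) | w p = true} =
      #{p ∈ range (2 * r + 1) | w p = true} := by
    simp only [card_filter]
    exact sum_range_add_sum_Ico _ (by omega)
  have hinter : #(Ico r (r + t) ∩ {p ∈ Ico t (2 * r + 1) | w p = true}) ≤
      #{p ∈ range t | w (p + r) = true} := by
    calc _ ≤ #(({p ∈ range t | w (p + r) = true}).image (· + r)) := by
          refine card_le_card fun p hp => ?_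
          simp only [mem_inter, mem_Ico, mem_filter] at hp
          simp only [mem_image, mem_filter, mem_range]
          exact ⟨p - r, ⟨by omega, by rw [Nat.sub_add_cancel hp.1.1]; exact hp.2.2⟩, by omega⟩
      _ ≤ _ := card_image_le
  rw [Nat.card_Ico] at hunion
  omega

lemma iterate_ringStep_eq_true_of_mem_Ico (hσ : ∀ p ≤ 2 * r, σ (c + p) = w p)
    (htotal : r + 1 ≤ #{p ∈ range (2 * r + 1) | w p = true})
    (hprefix : ∀ t < r, #{p ∈ range t | w p = true} + #{p ∈ range t | w (p + r) = true} ≤ t)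
    {t : ℕ} (ht : t ≤ r) {p : ℕ} (hp : p ∈ Ico r (r + t)) :
    (ringStep n r)^[t] σ (c + p) = true := by
  induction t generalizing p with
  | zero => simp at hp
  | succ t ih =>
    rw [mem_Ico] at hp
    rw [Function.iterate_succ_apply']
    have hinit : ∀ q ≤ 2 * r, w q = true → (ringStep n r)^[t] σ (c + q) = true :=
      fun q hq hwq => iterate_ringStep_eq_true ((hσ q hq).trans hwq) t
    by_cases hlt : p < r + t
    · exact le_ringStep _ _ (ih (by omega) (mem_Ico.mpr ⟨hp.1, hlt⟩))
    obtain rfl : p = r + t := by omega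
    cases hwp : w (r + t)
    · refine ringStep_eq_true_of_card_le (Ico r (r + t) ∪ {q ∈ Ico t (2 * r + 1) | w q = true})
        (fun q hq => ?_) (fun q hq => ?_)
        (succ_le_card_Ico_union_filter (by omega) htotal (hprefix t (by omega)))
      · simp only [mem_union, mem_Ico, mem_filter] at hq
        rcases hq with hq | ⟨hq, hwq⟩
        · omega
        · exact ⟨by rintro rfl; simp [hwp] at hwq, by omega, by omega⟩
      · simp only [mem_union, mem_Ico, mem_filter] at hq
        rcases hq with hq | ⟨hq, hwq⟩
        · exact ih (by omega) (mem_Ico.mpr hq)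
        · exact hinit q (by omega) hwq
    · exact le_ringStep _ _ (hinit _ (by omega) hwp)

lemma iterate_add_ringStep_eq_true_of_mem_Icc (hσ : ∀ p ≤ 2 * r, σ (c + p) = w p)
    (hw0 : w 0 = true)
    {k : ℕ} (hk : ∀ p ∈ Icc r (2 * r), (ringStep n r)^[k] σ (c + p) = true)
    {s : ℕ} (hs : s ≤ r) {p : ℕ} (hp : p ∈ Icc (r - s) (2 * r)) :
    (ringStep n r)^[k + s] σ (c + p) = true := by
  induction s generalizing p with
  | zero => exact hk p (by simpa using hp)
  | succ s ih =>
    rw [mem_Icc] at hp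
    rw [← add_assoc, Function.iterate_succ_apply']
    by_cases hge : r - s ≤ p
    · exact le_ringStep _ _ (ih (by omega) (mem_Icc.mpr ⟨hge, hp.2⟩))
    rcases Nat.eq_zero_or_pos p with rfl | hpos
    · exact le_ringStep _ _ (iterate_ringStep_eq_true ((hσ 0 (Nat.zero_le _)).trans hw0) _)
    refine ringStep_eq_true_of_card_le (insert 0 (Ioc p (p + r))) (fun q hq => ?_)
      (fun q hq => ?_) ?_
    · simp only [mem_insert, mem_Ioc] at hq
      omega
    · simp only [mem_insert, mem_Ioc] at hq
      rcases hq with rfl | hq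
      · exact iterate_ringStep_eq_true ((hσ 0 (Nat.zero_le _)).trans hw0) _
      · exact ih (by omega) (mem_Icc.mpr ⟨by omega, by omega⟩)
    · rw [card_insert_of_notMem (by simp), Nat.card_Ioc]
      omega

lemma ringFix_eq_true_of_block (hn : 2 * r ≤ n) (hσ : ∀ p ≤ 2 * r, σ (c + p) = w p)
    (hw0 : w 0 = true) (hw2r : w (2 * r) = true)
    (htotal : r + 1 ≤ #{p ∈ range (2 * r + 1) | w p = true})
    (hprefix : ∀ t < r, #{p ∈ range t | w p = true} + #{p ∈ range t | w (p + r) = true} ≤ t)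
    {p : ℕ} (hp : p ≤ 2 * r) : ringFix n r σ (c + p) = true := by
  have hright : ∀ q ∈ Icc r (2 * r), (ringStep n r)^[r] σ (c + q) = true := by
    intro q hq
    rw [mem_Icc] at hq
    by_cases hq2r : q < 2 * r
    · exact iterate_ringStep_eq_true_of_mem_Ico hσ htotal hprefix le_rfl
        (mem_Ico.mpr ⟨hq.1, by omega⟩)
    obtain rfl : q = 2 * r := by omega
    exact iterate_ringStep_eq_true ((hσ _ le_rfl).trans hw2r) r
  exact iterate_ringStep_eq_true_of_le (by omega)
    (iterate_add_ringStep_eq_true_of_mem_Icc hσ hw0 hright le_rfl (mem_Icc.mpr ⟨by omega, hp⟩))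

end Sweeps

lemma card_filter_add_card_filter_shift_le {w : ℕ → Bool} {r t : ℕ}
    (h : 0 ≤ ∑ i ∈ range t, dyckWt (w i) (w (i + r))) :
    #{p ∈ range t | w p = true} + #{p ∈ range t | w (p + r) = true} ≤ t := by
  have hweight : ∀ a b : Bool,
      ((if a = true then 1 else 0) + (if b = true then 1 else 0) : ℤ) = 1 - dyckWt a b := by
    decide
  zify
  simp only [card_filter, Nat.cast_sum, Nat.cast_ite, Nat.cast_one, Nat.cast_zero,
    ← sum_add_distrib, hweight, sum_sub_distrib, sum_const, card_range, nsmul_eq_mul, mul_one]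
  linarith

lemma notMem_Wword_of_card_lt {ℓ r : ℕ} {v : Fin ℓ → Bool}
    (h : #{i | v i = false} < r + 1) : v ∉ Wword ℓ r := by
  rintro ⟨i, hi, hzero⟩
  have : NeZero ℓ := ⟨by omega⟩
  refine h.not_ge ?_
  have hinj := card_le_card_of_injOn (s := range (r + 1)) (t := {i | v i = false})
    (fun j => ((i + j : ℕ) : Fin ℓ)) (fun j hj => ?_) (fun j hj k hk hjk => ?_)
  · simpa using hinj
  · rw [coe_range, Set.mem_Iio] at hj
    have hcast : ((i + j : ℕ) : Fin ℓ) = ⟨i + j, by omega⟩ :=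
      Fin.ext (Fin.val_cast_of_lt (by omega))
    simp only [coe_filter, mem_univ, true_and, Set.mem_ofPred_eq, hcast]
    exact hzero j hj
  · rw [coe_range, Set.mem_Iio] at hj hk
    have := congrArg Fin.val hjk
    simp only [Fin.val_cast_of_lt (by omega : i + j < ℓ),
      Fin.val_cast_of_lt (by omega : i + k < ℓ)] at this
    omega

lemma Tset_subset_Sspread (r : ℕ) : Tset r ⊆ Sspread (2 * r + 1) r := by
  rintro v ⟨hones, hzeros, hv0, hv2r, hvr, hdyck, -⟩
  set w : ℕ → Bool := fun p => v p with hw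
  have hwv : ∀ p (hp : p < 2 * r + 1), w p = v ⟨p, hp⟩ := fun p hp =>
    congrArg v (Fin.ext (Fin.val_cast_of_lt hp))
  have htotal : r + 1 ≤ #{p ∈ range (2 * r + 1) | w p = true} := by
    rw [← hones, card_filter, card_filter, ← Fin.sum_univ_eq_sum_range]
    simp only [hw, Fin.cast_val_eq_self, le_refl]
  have hdyck_prefix : ∀ t < r, 0 ≤ ∑ i ∈ range t, dyckWt (w i) (w (i + r)) := by
    rintro (_ | t) ht
    · simp
    rw [sum_range_succ', zero_add, range_eq_Ico,
      sum_Ico_add' (fun i => dyckWt (w i) (w (i + r))), Ico_add_one_right_eq_Icc]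
    have hd0 : dyckWt (w 0) (w r) = 0 := by simp [hw, hv0, hvr, dyckWt]
    rw [hd0, add_zero]
    rcases Nat.eq_zero_or_pos t with rfl | ht0
    · simp
    exact hdyck t (mem_Icc.mpr ⟨ht0, by omega⟩)
  refine ⟨notMem_Wword_of_card_lt (by omega), fun n hn _ c σ hσ i => ?_⟩
  exact ringFix_eq_true_of_block (w := w) (by omega)
    (fun p hp => (hσ ⟨p, by omega⟩).trans (hwv p (by omega)).symm) hv0 hv2r htotal
    (fun t ht => card_filter_add_card_filter_shift_le (hdyck_prefix t ht)) (by omega)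

theorem T_card_le_S_card_general (r : ℕ) :
    (Tset r).ncard ≤ (Sspread (2 * r + 1) r).ncard :=
  Set.ncard_le_ncard (Tset_subset_Sspread r) (Set.toFinite _)

/-- `|T_r| ≤ |S_{2r+1,r}|`. -/
theorem T_card_le_S_card (r : ℕ) (hr : 0 < r) :
    (Tset r).ncard ≤ (Sspread (2 * r + 1) r).ncard :=
  T_card_le_S_card_general r
end

section
/- There exist a constant c > 0 and a nonnegative integer d such that for all positive integers r, |T_r| ≥ c·4^r / r^d. -/
open Finset
open Fin.NatCast

/-!
A Dyck word `b` of semilength `r - 1` (reading `D` as `1`) fills the free positions of a word of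
`T_r` by `v_i = b_{2i-2}` and `v_{i+r} = b_{2i-1}` for `0 < i < r`. The weight of `w_i` is then
`1` minus the number of `D`s among `b_{2i-2}, b_{2i-1}`, so the `j`-th prefix sum of weights is
half the height of the Dyck path after `2j` steps. Hence `|T_r| ≥ C_{r-1}`, and the bound
`4^n ≤ (2n+1) binom(2n, n) = (2n+1)(n+1) C_n` gives `|T_r| ≥ 4^r / (8 r^2)`.
-/

namespace Finset

theorem sum_range_two_mul {M : Type*} [AddCommMonoid M] (f : ℕ → M) (n : ℕ) :
    ∑ k ∈ range (2 * n), f k = ∑ i ∈ range n, (f (2 * i) + f (2 * i + 1)) := by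
  induction n with
  | zero => simp
  | succ n ih =>
    rw [show 2 * (n + 1) = 2 * n + 1 + 1 by ring, sum_range_succ, sum_range_succ, ih,
      sum_range_succ, add_assoc]

theorem sum_range_two_mul_add_three {M : Type*} [AddCommMonoid M] (f : ℕ → M) (m : ℕ) :
    ∑ n ∈ range (2 * (m + 1) + 1), f n =
      f 0 + f (m + 1) + f (2 * (m + 1)) + ∑ i ∈ range m, (f (i + 1) + f (i + 1 + (m + 1))) := by
  rw [sum_range_succ, two_mul, sum_range_add, ← sum_add_distrib, sum_range_succ']
  simp only [add_comm (m + 1), zero_add]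
  abel

theorem sum_Icc_one_eq_sum_range {M : Type*} [AddCommMonoid M] (f : ℕ → M) (j : ℕ) :
    ∑ i ∈ Icc 1 j, f i = ∑ i ∈ range j, f (i + 1) := by
  rw [range_eq_Ico, sum_Ico_add' f 0 j 1]
  rfl

end Finset

theorem dyckWt_eq (a b : Bool) : dyckWt a b = 1 - a.toNat - b.toNat := by
  cases a <;> cases b <;> rfl

namespace DyckWord

open DyckStep

theorem count_U_add_count_D (l : List DyckStep) : l.count U + l.count D = l.length := by
  induction l with
  | nil => rfl
  | cons a l ih => cases a <;> simp <;> omega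

theorem sum_toNat_getD_eq_D (l : List DyckStep) (n : ℕ) :
    ∑ k ∈ range n, (decide (l.getD k U = D)).toNat = (l.take n).count D := by
  induction l generalizing n with
  | nil => simp
  | cons a l ih =>
    cases n with
    | zero => simp
    | succ n =>
      simp only [sum_range_succ', List.getD_cons_succ, List.getD_cons_zero, List.take_succ_cons,
        List.count_cons, ih]
      cases a <;> rfl

def isD (p : DyckWord) (k : ℕ) : Bool := p.toList.getD k U = D

theorem sum_isD_le (p : DyckWord) (j : ℕ) : ∑ k ∈ range (2 * j), (p.isD k).toNat ≤ j := by
  have hcount := count_U_add_count_D (p.toList.take (2 * j))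
  have hle := p.count_D_le_count_U (2 * j)
  rw [List.length_take] at hcount
  simp only [isD, sum_toNat_getD_eq_D]
  omega

theorem sum_isD_two_mul_semilength (p : DyckWord) :
    ∑ k ∈ range (2 * p.semilength), (p.isD k).toNat = p.semilength := by
  simp only [isD]
  rw [sum_toNat_getD_eq_D, two_mul_semilength_eq_length, List.take_length,
    semilength_eq_count_D]

theorem eq_of_isD_eq {p q : DyckWord} (hpq : p.semilength = q.semilength)
    (h : ∀ k < 2 * p.semilength, p.isD k = q.isD k) : p = q := by
  have hp := p.two_mul_semilength_eq_length
  have hq := q.two_mul_semilength_eq_length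
  refine DyckWord.ext (List.ext_getElem (by omega) fun k hkp hkq => ?_)
  have := h k (by omega)
  simp only [isD, List.getD_eq_getElem _ _ hkp, List.getD_eq_getElem _ _ hkq] at this
  revert this
  cases p.toList[k] <;> cases q.toList[k] <;> simp

end DyckWord

theorem mem_Tset_of_nat {r : ℕ} {w : ℕ → Bool}
    (hcount : ∑ n ∈ range (2 * r + 1), (w n).toNat = r + 1)
    (h0 : w 0 = true) (h2r : w (2 * r) = true) (hr : w r = false)
    (hpre : ∀ j ∈ Icc 1 (r - 1), 0 ≤ ∑ i ∈ Icc 1 j, dyckWt (w i) (w (i + r)))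
    (htot : ∑ i ∈ Icc 1 (r - 1), dyckWt (w i) (w (i + r)) = 0) :
    (fun i : Fin (2 * r + 1) => w i) ∈ Tset r := by
  have hcast {n : ℕ} (hn : n < 2 * r + 1) : w ((n : Fin (2 * r + 1)) : ℕ) = w n := by
    rw [Fin.val_cast_of_lt hn]
  have hsum : ∀ j ≤ r - 1, ∑ i ∈ Icc 1 j,
      dyckWt (w ((i : Fin (2 * r + 1)) : ℕ)) (w (((i + r : ℕ) : Fin (2 * r + 1)) : ℕ)) =
        ∑ i ∈ Icc 1 j, dyckWt (w i) (w (i + r)) := by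
    intro j hj
    refine sum_congr rfl fun i hi => ?_
    simp only [mem_Icc] at hi
    rw [hcast (by omega), hcast (by omega)]
  have htrue : #{i : Fin (2 * r + 1) | w i = true} = r + 1 := by
    rw [card_filter, ← hcount, Fin.sum_univ_eq_sum_range (fun n => if w n = true then 1 else 0)]
    exact sum_congr rfl fun n _ => by cases w n <;> rfl
  have hfalse : #{i : Fin (2 * r + 1) | w i = false} = r := by
    have := card_filter_add_card_filter_not (s := (univ : Finset (Fin (2 * r + 1))))
      (fun i => w i = true)
    simp only [Bool.not_eq_true, card_univ, Fintype.card_fin, htrue] at this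
    omega
  refine ⟨htrue, hfalse, (hcast (by omega)).trans h0, (hcast (by omega)).trans h2r,
    (hcast (by omega)).trans hr, fun j hj => ?_, ?_⟩
  · rw [hsum j (mem_Icc.1 hj).2]; exact hpre j hj
  · rw [hsum _ le_rfl]; exact htot

theorem four_pow_le_two_mul_succ_sq_mul_catalan (m : ℕ) :
    4 ^ m ≤ 2 * (m + 1) ^ 2 * catalan m := by
  calc 4 ^ m ≤ (2 * m + 1) * Nat.centralBinom m :=
        Nat.four_pow_le_two_mul_add_one_mul_central_binom m
    _ = (2 * m + 1) * ((m + 1) * catalan m) := by rw [succ_mul_catalan_eq_centralBinom]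
    _ ≤ 2 * (m + 1) ^ 2 * catalan m := by
      rw [← mul_assoc]; exact Nat.mul_le_mul_right _ (by nlinarith)

namespace Tset

def interleave (m : ℕ) (b : ℕ → Bool) (n : ℕ) : Bool :=
  if n = 0 ∨ n = 2 * (m + 1) then true
  else if n = m + 1 then false
  else if n ≤ m then b (2 * (n - 1))
  else b (2 * (n - (m + 2)) + 1)

variable {m : ℕ} {b : ℕ → Bool}

theorem interleave_succ {i : ℕ} (hi : i < m) : interleave m b (i + 1) = b (2 * i) := by
  rw [interleave, if_neg, if_neg, if_pos, Nat.add_sub_cancel] <;> omega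

theorem interleave_succ_add {i : ℕ} (hi : i < m) :
    interleave m b (i + 1 + (m + 1)) = b (2 * i + 1) := by
  rw [interleave, if_neg, if_neg, if_neg, show i + 1 + (m + 1) - (m + 2) = i by omega] <;> omega

theorem sum_toNat_interleave :
    ∑ n ∈ range (2 * (m + 1) + 1), (interleave m b n).toNat =
      2 + ∑ k ∈ range (2 * m), (b k).toNat := by
  have hpairs : ∀ i ∈ range m, (interleave m b (i + 1)).toNat +
      (interleave m b (i + 1 + (m + 1))).toNat = (b (2 * i)).toNat + (b (2 * i + 1)).toNat := by
    intro i hi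
    rw [interleave_succ (mem_range.1 hi), interleave_succ_add (mem_range.1 hi)]
  rw [sum_range_two_mul_add_three, sum_range_two_mul, sum_congr rfl hpairs]
  simp [interleave]

theorem sum_dyckWt_interleave {j : ℕ} (hj : j ≤ m) :
    ∑ i ∈ Icc 1 j, dyckWt (interleave m b i) (interleave m b (i + (m + 1))) =
      j - ∑ k ∈ range (2 * j), ((b k).toNat : ℤ) := by
  have hj_eq : (j : ℤ) = ∑ _i ∈ range j, 1 := by simp
  rw [sum_Icc_one_eq_sum_range, sum_range_two_mul, hj_eq, ← sum_sub_distrib]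
  refine sum_congr rfl fun i hi => ?_
  have hi : i < m := by have := mem_range.1 hi; omega
  rw [interleave_succ hi, interleave_succ_add hi, dyckWt_eq]
  ring

theorem interleave_mem (hpre : ∀ j ≤ m, ∑ k ∈ range (2 * j), (b k).toNat ≤ j)
    (htot : ∑ k ∈ range (2 * m), (b k).toNat = m) :
    (fun i : Fin (2 * (m + 1) + 1) => interleave m b i) ∈ Tset (m + 1) := by
  refine mem_Tset_of_nat ?_ (by simp [interleave]) (by simp [interleave]) (by simp [interleave])
    (fun j hj => ?_) ?_
  · rw [sum_toNat_interleave, htot]; ring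
  · simp only [mem_Icc, Nat.add_sub_cancel] at hj
    rw [sum_dyckWt_interleave hj.2, sub_nonneg]
    exact_mod_cast hpre j hj.2
  · rw [Nat.add_sub_cancel, sum_dyckWt_interleave le_rfl, sub_eq_zero]
    exact_mod_cast htot.symm

theorem eq_of_interleave_eq {b' : ℕ → Bool}
    (h : (fun i : Fin (2 * (m + 1) + 1) => interleave m b i) =
      fun i : Fin (2 * (m + 1) + 1) => interleave m b' i)
    {k : ℕ} (hk : k < 2 * m) : b k = b' k := by
  have hval (n : ℕ) (hn : n < 2 * (m + 1) + 1) : interleave m b n = interleave m b' n := by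
    simpa [Fin.val_cast_of_lt hn] using congrFun h n
  obtain ⟨i, rfl | rfl⟩ := Nat.even_or_odd' k
  · have hi : i < m := by omega
    rw [← interleave_succ (b := b) hi, ← interleave_succ (b := b') hi]
    exact hval _ (by omega)
  · have hi : i < m := by omega
    rw [← interleave_succ_add (b := b) hi, ← interleave_succ_add (b := b') hi]
    exact hval _ (by omega)

theorem catalan_le_ncard (m : ℕ) : catalan m ≤ (Tset (m + 1)).ncard := by
  let f : {p : DyckWord // p.semilength = m} → Tset (m + 1) := fun p =>
    ⟨_, interleave_mem (fun j _ => p.1.sum_isD_le j)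
      (by simpa only [p.2] using p.1.sum_isD_two_mul_semilength)⟩
  have hf : Function.Injective f := fun p q hpq =>
    Subtype.ext <| DyckWord.eq_of_isD_eq (p.2.trans q.2.symm) fun k hk =>
      eq_of_interleave_eq (congrArg Subtype.val hpq) (p.2 ▸ hk)
  rw [← DyckWord.card_dyckWord_semilength_eq_catalan, ← Nat.card_eq_fintype_card,
    ← Nat.card_coe_set_eq]
  exact Nat.card_le_card_of_injective f hf

theorem four_pow_le_ncard (m : ℕ) : 4 ^ (m + 1) ≤ 8 * (m + 1) ^ 2 * (Tset (m + 1)).ncard :=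
  calc 4 ^ (m + 1) = 4 * 4 ^ m := pow_succ' 4 m
    _ ≤ 4 * (2 * (m + 1) ^ 2 * catalan m) :=
        Nat.mul_le_mul_left 4 (four_pow_le_two_mul_succ_sq_mul_catalan m)
    _ ≤ 4 * (2 * (m + 1) ^ 2 * (Tset (m + 1)).ncard) := by gcongr; exact catalan_le_ncard m
    _ = 8 * (m + 1) ^ 2 * (Tset (m + 1)).ncard := by ring

end Tset

/-- There are `c > 0` and `d ∈ ℕ` such that `|T_r| ≥ c·4^r/r^d` for all `r ≥ 1`. -/
theorem T_card_asymptotic :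
    ∃ c : ℝ, 0 < c ∧ ∃ d : ℕ, ∀ r : ℕ, 0 < r →
      c * 4 ^ r / (r : ℝ) ^ d ≤ ((Tset r).ncard : ℝ) := by
  refine ⟨1 / 8, by norm_num, 2, fun r hr => ?_⟩
  obtain ⟨m, rfl⟩ := Nat.exists_eq_add_one_of_ne_zero hr.ne'
  have key : (4 : ℝ) ^ (m + 1) ≤ 8 * ((m + 1 : ℕ) : ℝ) ^ 2 * (Tset (m + 1)).ncard := by
    exact_mod_cast Tset.four_pow_le_ncard m
  rw [div_le_iff₀ (by positivity)]
  linarith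
end
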